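/- At every point p = (ρ, η, θ, φ) with 0 < ρ < 1 and η > 0, the constant vector X_J = (0, 0, 1, 1) satisfies ω_N(p)(X_J, v) = dJ_N(p)(v) for all v ∈ ℝ⁴, where J_N(ρ, η, θ, φ) = ρη sin(φ − θ) and dJ_N(p) is its derivative at p. That is, X_J = ∂/∂θ + ∂/∂φ is the Hamiltonian vector field of the angular momentum in the northern chart. -/
import Mathlib


open Real

/-- The symplectic form `ω_N` on the northern chart domain
`{(ρ, η, θ, φ) : 0 < ρ < 1, η > 0}`, as a bilinear-form-valued function. -/
noncomputable def omegaN (p a b : Fin 4 → ℝ) : ℝ :=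
  Real.cos (p 3 - p 2) / (1 - p 0 ^ 2) * (a 0 * b 1 - a 1 * b 0)
  + p 0 ^ 2 * p 1 * Real.sin (p 3 - p 2) / (1 - p 0 ^ 2) * (a 0 * b 2 - a 2 * b 0)
  - p 1 * Real.sin (p 3 - p 2) / (1 - p 0 ^ 2) * (a 0 * b 3 - a 3 * b 0)
  - p 0 * Real.sin (p 3 - p 2) * (a 1 * b 2 - a 2 * b 1)
  + p 0 * p 1 * Real.cos (p 3 - p 2) * (a 2 * b 3 - a 3 * b 2)

/-- Angular momentum in the northern chart: `J_N (ρ, η, θ, φ) = ρ η sin (φ - θ)`. -/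
noncomputable def JN (p : Fin 4 → ℝ) : ℝ := p 0 * p 1 * Real.sin (p 3 - p 2)

/-- the constant vector field `X_J = ∂/∂θ + ∂/∂φ = (0,0,1,1)` is the
Hamiltonian vector field of `J_N` with respect to `ω_N`: `ω_N(X_J, ·) = dJ_N`. -/
theorem XJ_is_hamiltonian_vector_field_of_JN
    (p : Fin 4 → ℝ) (h0 : 0 < p 0) (h1 : p 0 < 1) (h2 : 0 < p 1) :
    ∀ v : Fin 4 → ℝ, omegaN p ![0, 0, 1, 1] v = fderiv ℝ JN p v := by
  intro v
  set e : Fin 4 → (Fin 4 → ℝ) →L[ℝ] ℝ := fun i => ContinuousLinearMap.proj i with he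
  have hδ : HasFDerivAt (fun q : Fin 4 → ℝ => q 3 - q 2) (e 3 - e 2) p :=
    ((e 3).hasFDerivAt).sub ((e 2).hasFDerivAt)
  have hs := hδ.sin
  have h01 : HasFDerivAt (fun q : Fin 4 → ℝ => q 0 * q 1)
      (p 0 • e 1 + p 1 • e 0) p := ((e 0).hasFDerivAt).mul ((e 1).hasFDerivAt)
  have hJ := h01.mul hs
  have hf : fderiv ℝ JN p = _ := hJ.fderiv
  rw [hf]
  have hρ : (1 : ℝ) - p 0 ^ 2 ≠ 0 := by nlinarith
  simp only [he, ContinuousLinearMap.add_apply, ContinuousLinearMap.smul_apply,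
    ContinuousLinearMap.sub_apply, ContinuousLinearMap.proj_apply, smul_eq_mul,
    omegaN, Matrix.cons_val_zero, Matrix.cons_val_one, Matrix.head_cons,
    Matrix.cons_val_two, Matrix.tail_cons, Matrix.cons_val_three]
  field_simp
  ring
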